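/- Let N ≥ 8. There exists a subset Ω₁ of {0,1}^N of cardinality at least 2^{N/8} such that any two distinct elements ω, ω̃ ∈ Ω₁ have Hamming distance ρ(ω, ω̃) ≥ N/8. -/
import Mathlib

open Finset

/-- The Varshamov–Gilbert bound: for N ≥ 8 there is a subset of {0,1}^N
of cardinality at least 2^{N/8} whose distinct elements are at Hamming distance ≥ N/8. -/
theorem stmt8 (N : ℕ) (hN : 8 ≤ N) :
    ∃ Ω₁ : Finset (Fin N → Bool),
      (2 : ℝ) ^ ((N : ℝ) / 8) ≤ (Ω₁.card : ℝ) ∧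
      ∀ ω ∈ Ω₁, ∀ ω' ∈ Ω₁, ω ≠ ω' →
        (N : ℝ) / 8 ≤ ((Finset.univ.filter (fun i : Fin N => ω i ≠ ω' i)).card : ℝ) := by
  classical
  set d : ℕ := (N + 7) / 8 with hd
  set m : ℕ := d - 1 with hm
  have hd1 : 1 ≤ d := by omega
  have h8d : N ≤ 8 * d := by omega
  have h8m : 8 * m ≤ N := by omega
  have hmN : m + 1 ≤ N + 1 := by omega
  -- the pairwise-distance property
  set P : Finset (Fin N → Bool) → Prop := fun C =>
    ∀ ω ∈ C, ∀ ω' ∈ C, ω ≠ ω' →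
      d ≤ (Finset.univ.filter (fun i : Fin N => ω i ≠ ω' i)).card with hP
  -- a maximal code
  obtain ⟨C, hC, hmax⟩ : ∃ C, P C ∧ ∀ C', P C' → C'.card ≤ C.card := by
    obtain ⟨C, hCmem, hCmax⟩ := Finset.exists_max_image
      ((Finset.univ : Finset (Finset (Fin N → Bool))).filter P) Finset.card
      ⟨∅, by simp [hP]⟩
    refine ⟨C, (Finset.mem_filter.1 hCmem).2, fun C' hC' => hCmax C' ?_⟩
    exact Finset.mem_filter.2 ⟨Finset.mem_univ _, hC'⟩
  -- covering property of a maximal code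
  have hcover : ∀ x : Fin N → Bool, ∃ c ∈ C,
      (Finset.univ.filter (fun i : Fin N => x i ≠ c i)).card ≤ m := by
    intro x
    by_cases hx : x ∈ C
    · exact ⟨x, hx, by simp⟩
    · by_contra h
      push_neg at h
      have hdle : ∀ c ∈ C, d ≤ (Finset.univ.filter (fun i : Fin N => x i ≠ c i)).card := by
        intro c hc; have := h c hc; omega
      have hcx : ∀ c ∈ C, d ≤ (Finset.univ.filter (fun i : Fin N => c i ≠ x i)).card := by
        intro c hc
        have hsymm : (Finset.univ.filter (fun i : Fin N => c i ≠ x i))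
            = (Finset.univ.filter (fun i : Fin N => x i ≠ c i)) := by
          apply Finset.filter_congr; intro i _; simp [ne_comm]
        rw [hsymm]; exact hdle c hc
      have hins : P (insert x C) := by
        intro ω hω ω' hω' hne
        rcases Finset.mem_insert.1 hω with h1 | h1 <;>
          rcases Finset.mem_insert.1 hω' with h2 | h2
        · exact absurd (h1.trans h2.symm) hne
        · subst h1; exact hdle _ h2
        · subst h2; exact hcx _ h1
        · exact hC _ h1 _ h2 hne
      have hle := hmax _ hins
      rw [Finset.card_insert_of_notMem hx] at hle
      omega
  -- volume bound for Hamming balls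
  have hball : ∀ c : Fin N → Bool,
      (Finset.univ.filter (fun y : Fin N → Bool =>
        (Finset.univ.filter (fun i : Fin N => y i ≠ c i)).card ≤ m)).card
        ≤ ∑ k ∈ Finset.range (m + 1), N.choose k := by
    intro c
    have h1 : (Finset.univ.filter (fun y : Fin N → Bool =>
        (Finset.univ.filter (fun i : Fin N => y i ≠ c i)).card ≤ m)).card
        ≤ ((Finset.range (m + 1)).biUnion
            (fun k => Finset.powersetCard k (Finset.univ : Finset (Fin N)))).card := by
      apply Finset.card_le_card_of_injOn
        (fun y => Finset.univ.filter (fun i : Fin N => y i ≠ c i))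
      · intro y hy
        have hy' := (Finset.mem_filter.1 hy).2
        refine Finset.mem_biUnion.2 ⟨_, Finset.mem_range.2 (Nat.lt_succ_of_le hy'), ?_⟩
        exact Finset.mem_powersetCard.2 ⟨Finset.subset_univ _, rfl⟩
      · intro y hy y' hy' hSS
        funext i
        have hi := Finset.ext_iff.1 hSS i
        simp only [Finset.mem_filter, Finset.mem_univ, true_and] at hi
        revert hi
        cases hyi : y i <;> cases hy'i : y' i <;> cases hci : c i <;> simp
    refine h1.trans (Finset.card_biUnion_le.trans ?_)
    apply Finset.sum_le_sum
    intro k _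
    rw [Finset.card_powersetCard, Finset.card_univ, Fintype.card_fin]
  -- counting
  have hcount : 2 ^ N ≤ C.card * ∑ k ∈ Finset.range (m + 1), N.choose k := by
    have hsub : (Finset.univ : Finset (Fin N → Bool)) ⊆
        C.biUnion (fun c => Finset.univ.filter (fun y : Fin N → Bool =>
          (Finset.univ.filter (fun i : Fin N => y i ≠ c i)).card ≤ m)) := by
      intro x _
      rcases hcover x with ⟨c, hc, hxc⟩
      exact Finset.mem_biUnion.2 ⟨c, hc, Finset.mem_filter.2 ⟨Finset.mem_univ _, hxc⟩⟩
    calc 2 ^ N = (Finset.univ : Finset (Fin N → Bool)).card := by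
          simp [Finset.card_univ]
      _ ≤ _ := Finset.card_le_card hsub
      _ ≤ ∑ c ∈ C, (Finset.univ.filter (fun y : Fin N → Bool =>
            (Finset.univ.filter (fun i : Fin N => y i ≠ c i)).card ≤ m)).card :=
          Finset.card_biUnion_le
      _ ≤ ∑ _c ∈ C, ∑ k ∈ Finset.range (m + 1), N.choose k :=
          Finset.sum_le_sum (fun c _ => hball c)
      _ = C.card * ∑ k ∈ Finset.range (m + 1), N.choose k := by
          rw [Finset.sum_const, smul_eq_mul]
  -- real-valued volume bound
  set V : ℝ := ((∑ k ∈ Finset.range (m + 1), N.choose k : ℕ) : ℝ) with hV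
  have hV1 : (1 : ℝ) ≤ V := by
    have : 1 ≤ ∑ k ∈ Finset.range (m + 1), N.choose k := by
      have : N.choose 0 ≤ ∑ k ∈ Finset.range (m + 1), N.choose k :=
        Finset.single_le_sum (f := fun k => N.choose k) (fun _ _ => Nat.zero_le _)
          (Finset.mem_range.2 (Nat.succ_pos m))
      simpa using this
    rw [hV]; exact_mod_cast this
  have hVpos : (0 : ℝ) < V := lt_of_lt_of_le one_pos hV1
  have hVbound : V ≤ 7 ^ m * (8 / 7) ^ N := by
    have key : ∑ k ∈ Finset.range (m + 1), (N.choose k : ℝ) * (1 / 7) ^ m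
        ≤ ∑ k ∈ Finset.range (N + 1), (N.choose k : ℝ) * (1 / 7) ^ k := by
      refine le_trans (Finset.sum_le_sum ?_)
        (Finset.sum_le_sum_of_subset_of_nonneg
          (Finset.range_subset_range.2 hmN) (fun k _ _ => by positivity))
      intro k hk
      have hk' : k ≤ m := Nat.lt_succ_iff.1 (Finset.mem_range.1 hk)
      have : ((1 : ℝ) / 7) ^ m ≤ (1 / 7) ^ k :=
        pow_le_pow_of_le_one (by norm_num) (by norm_num) hk'
      have hc : (0 : ℝ) ≤ (N.choose k : ℝ) := by positivity
      nlinarith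
    have hbin : ∑ k ∈ Finset.range (N + 1), (N.choose k : ℝ) * (1 / 7) ^ k
        = (8 / 7) ^ N := by
      have := add_pow (R := ℝ) (1 / 7) 1 N
      simp only [one_pow, mul_one] at this
      rw [show ((8 : ℝ) / 7) = 1 / 7 + 1 by norm_num, this]
      apply Finset.sum_congr rfl
      intro k _
      push_cast
      ring
    have hpull : ∑ k ∈ Finset.range (m + 1), (N.choose k : ℝ) * (1 / 7) ^ m
        = V * (1 / 7) ^ m := by
      rw [hV]
      push_cast
      rw [← Finset.sum_mul]
    have h2 : V * (1 / 7) ^ m ≤ (8 / 7) ^ N := by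
      rw [← hpull, ← hbin] at *; exact key
    have h7 : (0 : ℝ) < (1 / 7 : ℝ) ^ m := by positivity
    calc V = V * (1 / 7) ^ m * 7 ^ m := by
          rw [mul_assoc, ← mul_pow]; norm_num
      _ ≤ (8 / 7) ^ N * 7 ^ m := by
          have h7' : (0 : ℝ) ≤ (7 : ℝ) ^ m := by positivity
          exact mul_le_mul_of_nonneg_right h2 h7'
      _ = 7 ^ m * (8 / 7) ^ N := by ring
  -- main real inequality: 2^(N/8) * V ≤ 2^N
  have hmain : (2 : ℝ) ^ ((N : ℝ) / 8) * (7 ^ m * (8 / 7) ^ N) ≤ 2 ^ N := by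
    set x : ℝ := (N : ℝ) / 8 with hx
    have hx0 : 0 ≤ x := by positivity
    have hmx : (m : ℝ) ≤ x := by
      rw [hx, le_div_iff₀ (by norm_num)]
      have : (8 * m : ℝ) ≤ (N : ℝ) := by exact_mod_cast h8m
      linarith
    have h7m : (7 : ℝ) ^ m ≤ (7 : ℝ) ^ x := by
      rw [← Real.rpow_natCast 7 m]
      exact Real.rpow_le_rpow_of_exponent_le (by norm_num) hmx
    have h14 : (2 : ℝ) ^ x * (7 : ℝ) ^ x = (14 : ℝ) ^ x := by
      rw [← Real.mul_rpow (by norm_num) (by norm_num)]; norm_num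
    have hkey : (14 : ℝ) ^ x ≤ ((7 / 4 : ℝ)) ^ N := by
      have h1 : (14 : ℝ) ≤ (7 / 4 : ℝ) ^ (8 : ℕ) := by norm_num
      have h2 : (14 : ℝ) ^ x ≤ ((7 / 4 : ℝ) ^ (8 : ℕ)) ^ x :=
        Real.rpow_le_rpow (by norm_num) h1 hx0
      refine h2.trans_eq ?_
      rw [← Real.rpow_natCast ((7:ℝ)/4) 8, ← Real.rpow_mul (by norm_num),
        ← Real.rpow_natCast ((7:ℝ)/4) N]
      congr 1
      rw [hx]; push_cast; ring
    have h2pow : (2 : ℝ) ^ x * 7 ^ m * (8 / 7) ^ N ≤ (14 : ℝ) ^ x * (8 / 7) ^ N := by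
      have hb : (0 : ℝ) ≤ (8 / 7 : ℝ) ^ N := by positivity
      have h2x : (0 : ℝ) ≤ (2 : ℝ) ^ x := (Real.rpow_pos_of_pos two_pos x).le
      have : (2 : ℝ) ^ x * 7 ^ m ≤ (2 : ℝ) ^ x * 7 ^ x :=
        mul_le_mul_of_nonneg_left h7m h2x
      rw [h14] at this
      exact mul_le_mul_of_nonneg_right this hb
    calc (2 : ℝ) ^ x * (7 ^ m * (8 / 7) ^ N)
        = (2 : ℝ) ^ x * 7 ^ m * (8 / 7) ^ N := by ring
      _ ≤ (14 : ℝ) ^ x * (8 / 7) ^ N := h2pow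
      _ ≤ (7 / 4 : ℝ) ^ N * (8 / 7) ^ N := by
          have hb : (0 : ℝ) ≤ (8 / 7 : ℝ) ^ N := by positivity
          exact mul_le_mul_of_nonneg_right hkey hb
      _ = 2 ^ N := by rw [← mul_pow]; norm_num
  refine ⟨C, ?_, ?_⟩
  · -- cardinality bound
    have hcountR : (2 : ℝ) ^ N ≤ (C.card : ℝ) * V := by
      rw [hV]; exact_mod_cast hcount
    have h1 : (2 : ℝ) ^ ((N : ℝ) / 8) * V ≤ (C.card : ℝ) * V := by
      calc (2 : ℝ) ^ ((N : ℝ) / 8) * V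
          ≤ (2 : ℝ) ^ ((N : ℝ) / 8) * (7 ^ m * (8 / 7) ^ N) := by
            have h2x : (0 : ℝ) ≤ (2 : ℝ) ^ ((N:ℝ)/8) :=
              (Real.rpow_pos_of_pos two_pos _).le
            exact mul_le_mul_of_nonneg_left hVbound h2x
        _ ≤ 2 ^ N := hmain
        _ ≤ (C.card : ℝ) * V := hcountR
    exact le_of_mul_le_mul_right h1 hVpos
  · -- distance bound
    intro ω hω ω' hω' hne
    have hdist := hC ω hω ω' hω' hne
    have : (N : ℝ) ≤ 8 * (d : ℝ) := by exact_mod_cast h8d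
    have hdR : (d : ℝ) ≤ ((Finset.univ.filter (fun i : Fin N => ω i ≠ ω' i)).card : ℝ) := by
      exact_mod_cast hdist
    linarith
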